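/- The spin-marginal of the Edwards-Sokal measure is the Ising Gibbs measure: for every σ ∈ {-1,+1}^V, Σ_{ω ∈ {0,1}^E} ν_{p,h,G}(σ,ω) = λ_{β,h,V}(σ), where ν_{p,h,G}(σ,ω) ∝ B_J(ω) Δ(σ,ω) exp(β Σ_{i∈V} h_i (δ_{σ_i,1}-δ_{σ_i,-1})) and λ_{β,h,V}(σ) ∝ exp(β(Σ_{{i,j}∈E} J_{ij} σ_i σ_j + Σ_{i∈V} h_i σ_i)). -/

import Mathlib

open Finset

noncomputable section

variable {V : Type}

/-- The spin value (±1) attached to a Boolean spin (`true ↔ +1`, `false ↔ -1`). -/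
def spin (b : Bool) : ℝ := if b then 1 else -1

/-- The subgraph of `G` whose open edges are the edges in `F`. -/
def openSub (G : SimpleGraph V) (F : Finset (Sym2 V)) : SimpleGraph V where
  Adj i j := G.Adj i j ∧ s(i, j) ∈ F
  symm := by
    refine ⟨?_⟩
    intro i j h
    exact ⟨h.1.symm, by rw [Sym2.eq_swap]; exact h.2⟩
  loopless := ⟨fun i h => G.irrefl h.1⟩

instance [Fintype V] (H : SimpleGraph V) : Fintype H.ConnectedComponent := by
  classical exact Fintype.ofSurjective H.connectedComponentMk Quot.exists_rep

/-- The vertex set of a connected component, as a `Finset`. -/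
def compSupp [Fintype V] (H : SimpleGraph V) (c : H.ConnectedComponent) : Finset V := by
  classical exact Finset.univ.filter fun v => H.connectedComponentMk v = c

/-- Kronecker delta `δ_{σ_i,σ_j}` of a configuration on an (unordered) edge. -/
def eDelta {S : Type} [DecidableEq S] (σ : V → S) : Sym2 V → ℝ :=
  Sym2.lift ⟨fun i j => if σ i = σ j then 1 else 0, fun _ _ => by simp [eq_comm]⟩

/-- Product of spins `σ_i σ_j` on an (unordered) edge. -/
def eProd (σ : V → Bool) : Sym2 V → ℝ :=
  Sym2.lift ⟨fun i j => spin (σ i) * spin (σ j), fun _ _ => mul_comm _ _⟩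

/-- The consistency indicator `Δ(σ,ω)`: equal to `1` iff `σ` is constant on
every open edge of the configuration `F`. -/
def Delta (G : SimpleGraph V) (F : Finset (Sym2 V)) (σ : V → Bool) : ℝ := by
  classical exact if ∀ i j, G.Adj i j → s(i, j) ∈ F → σ i = σ j then 1 else 0

/-- The Bernoulli factor `B_J(ω) = ∏_{e open} p_e ∏_{e closed} (1-p_e)`. -/
def bern [Fintype V] [DecidableEq V] (G : SimpleGraph V) [DecidableRel G.Adj]
    (p : Sym2 V → ℝ) (F : Finset (Sym2 V)) : ℝ :=
  (∏ e ∈ F, p e) * ∏ e ∈ G.edgeFinset \ F, (1 - p e)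

/-- The Edwards–Sokal weight `B_J(ω) Δ(σ,ω) exp(β Σ_i h_i (δ_{σ_i,1} - δ_{σ_i,-1}))`. -/
def esW [Fintype V] [DecidableEq V] (G : SimpleGraph V) [DecidableRel G.Adj]
    (β : ℝ) (p : Sym2 V → ℝ) (h : V → ℝ) (σ : V → Bool) (F : Finset (Sym2 V)) : ℝ :=
  bern G p F * Delta G F σ * Real.exp (β * ∑ i, h i * spin (σ i))

/-- The (unnormalized) Ising Boltzmann weight with free boundary condition. -/
def isingW [Fintype V] [DecidableEq V] (G : SimpleGraph V) [DecidableRel G.Adj]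
    (β : ℝ) (J : Sym2 V → ℝ) (h : V → ℝ) (σ : V → Bool) : ℝ :=
  Real.exp (β * ((∑ e ∈ G.edgeFinset, J e * eProd σ e) + ∑ i, h i * spin (σ i)))

/-!
Summing the Edwards–Sokal weight over bond configurations factorizes over the edges
(`Finset.prod_add`): an edge `e = {i, j}` contributes `p_e δ_{σ_i,σ_j} + (1 - p_e)`, which for
`p_e = 1 - exp(-2βJ_e)` equals `exp(βJ_e(σ_iσ_j - 1))`. Hence the spin marginal of the
Edwards–Sokal weight is the Ising weight times the constant `exp(-β Σ_e J_e)`, which cancels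
on normalizing.
-/

lemma Delta_eq_prod_eDelta [Fintype V] [DecidableRel (G : SimpleGraph V).Adj]
    {F : Finset (Sym2 V)} (hF : F ⊆ G.edgeFinset) (σ : V → Bool) :
    Delta G F σ = ∏ e ∈ F, eDelta σ e := by
  classical
  unfold Delta
  split_ifs with hconst
  · refine (prod_eq_one fun e he => ?_).symm
    have heG := SimpleGraph.mem_edgeFinset.mp (hF he)
    induction e using Sym2.ind with
    | _ i j => simp [eDelta, hconst i j heG he]
  · push Not at hconst
    obtain ⟨i, j, -, hij, hne⟩ := hconst
    exact (prod_eq_zero hij (by simp [eDelta, hne])).symm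

lemma eProd_eq_two_mul_eDelta_sub_one (σ : V → Bool) (e : Sym2 V) :
    eProd σ e = 2 * eDelta σ e - 1 := by
  induction e using Sym2.ind with
  | _ i j => cases hi : σ i <;> cases hj : σ j <;> norm_num [eProd, eDelta, spin, hi, hj]

lemma mul_eDelta_add_one_sub_eq_exp (β : ℝ) {J p : Sym2 V → ℝ}
    (hp : ∀ e, p e = 1 - Real.exp (-(2 * β) * J e)) (σ : V → Bool) (e : Sym2 V) :
    p e * eDelta σ e + (1 - p e) = Real.exp (β * (J e * (eProd σ e - 1))) := by
  have hδ : eDelta σ e = 0 ∨ eDelta σ e = 1 := by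
    induction e using Sym2.ind with
    | _ i j => by_cases hij : σ i = σ j <;> simp [eDelta, hij]
  rw [hp, eProd_eq_two_mul_eDelta_sub_one]
  rcases hδ with hδ | hδ <;> rw [hδ] <;> ring_nf
  exact Real.exp_zero.symm

lemma sum_bern_mul_Delta [Fintype V] [DecidableEq V] (G : SimpleGraph V) [DecidableRel G.Adj]
    (β : ℝ) {J p : Sym2 V → ℝ} (hp : ∀ e, p e = 1 - Real.exp (-(2 * β) * J e))
    (σ : V → Bool) :
    ∑ F ∈ G.edgeFinset.powerset, bern G p F * Delta G F σ
      = Real.exp (β * ∑ e ∈ G.edgeFinset, J e * (eProd σ e - 1)) :=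
  calc ∑ F ∈ G.edgeFinset.powerset, bern G p F * Delta G F σ
      = ∑ F ∈ G.edgeFinset.powerset,
          (∏ e ∈ F, p e * eDelta σ e) * ∏ e ∈ G.edgeFinset \ F, (1 - p e) := by
        refine sum_congr rfl fun F hF => ?_
        rw [Delta_eq_prod_eDelta (mem_powerset.mp hF), bern, prod_mul_distrib]
        ring
    _ = ∏ e ∈ G.edgeFinset, (p e * eDelta σ e + (1 - p e)) := (prod_add _ _ _).symm
    _ = ∏ e ∈ G.edgeFinset, Real.exp (β * (J e * (eProd σ e - 1))) :=
        prod_congr rfl fun e _ => mul_eDelta_add_one_sub_eq_exp β hp σ e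
    _ = _ := by rw [← Real.exp_sum, mul_sum]

lemma sum_esW_eq_mul_isingW [Fintype V] [DecidableEq V] (G : SimpleGraph V)
    [DecidableRel G.Adj] (β : ℝ) {J p : Sym2 V → ℝ}
    (hp : ∀ e, p e = 1 - Real.exp (-(2 * β) * J e)) (h : V → ℝ) (σ : V → Bool) :
    ∑ F ∈ G.edgeFinset.powerset, esW G β p h σ F
      = Real.exp (-(β * ∑ e ∈ G.edgeFinset, J e)) * isingW G β J h σ := by
  simp only [esW, isingW]
  rw [← sum_mul, sum_bern_mul_Delta G β hp σ, ← Real.exp_add, ← Real.exp_add]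
  congr 1
  simp only [mul_sub, sum_sub_distrib, mul_one]
  ring

theorem statement4_general [Fintype V] [DecidableEq V]
    (G : SimpleGraph V) [DecidableRel G.Adj]
    (β : ℝ)
    (J : Sym2 V → ℝ)
    (h : V → ℝ)
    (p : Sym2 V → ℝ) (hp : ∀ e, p e = 1 - Real.exp (-(2 * β) * J e))
    (σ : V → Bool) :
    (∑ F ∈ G.edgeFinset.powerset, esW G β p h σ F) /
        (∑ σ' : V → Bool, ∑ F ∈ G.edgeFinset.powerset, esW G β p h σ' F)
      = isingW G β J h σ / ∑ σ' : V → Bool, isingW G β J h σ' := by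
  simp only [sum_esW_eq_mul_isingW G β hp h]
  rw [← mul_sum, mul_div_mul_left _ _ (Real.exp_ne_zero _)]

/-- Theorem (marginals of the ES measure), part (1): the spin-marginal of the
Edwards–Sokal measure is the Ising Gibbs measure. -/
theorem statement4 [Fintype V] [DecidableEq V]
    (G : SimpleGraph V) [DecidableRel G.Adj]
    (β : ℝ) (hβ : 0 < β)
    (J : Sym2 V → ℝ) (hJ : ∀ e ∈ G.edgeFinset, 0 ≤ J e)
    (h : V → ℝ)
    (p : Sym2 V → ℝ) (hp : ∀ e, p e = 1 - Real.exp (-(2 * β) * J e))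
    (σ : V → Bool) :
    (∑ F ∈ G.edgeFinset.powerset, esW G β p h σ F) /
        (∑ σ' : V → Bool, ∑ F ∈ G.edgeFinset.powerset, esW G β p h σ' F)
      = isingW G β J h σ / ∑ σ' : V → Bool, isingW G β J h σ' :=
  statement4_general G β J h p hp σ

end
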